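/- arXiv:1412.2217 — 2 statements merged into one kernel-verified Lean document; each statement's English description precedes it below -/
import Mathlib

section
/- Let T be the integral transform (Tu)(x) = ∫_Y K(x,y) u(y) dμ_x(y) with ∫_Y K(x,y) dμ_x(y) = I for all x. If there exists a bounded nonnegative function g : X × Y × N_𝔖 → ℝ such that ᵗK(x,y) ν = g(x,y;ν) ν for all x ∈ X, all unit outward normals ν of the convex body 𝔖, and μ_x-almost all y ∈ Y, then 𝔖 is invariant for T: whenever a bounded Borel function u takes values in 𝔖, so does Tu. -/
/-!
Suppose `w = (Tu)(x)` lay outside `𝔖`. Its metric projection `a` onto `𝔖` is a boundary point at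
which `ν = (w - a) / |w - a|` is a unit outward normal, and `(w - a) ⬝ᵥ ν > 0`. On the other hand,
`∫ K(x,·) dμ_x = I` gives `(w - a) ⬝ᵥ ν = ∫ (u(y) - a) ⬝ᵥ ᵗK(x,y) ν dμ_x(y)`, and the eigenvector
condition turns the integrand into `g(x,y;ν) (u(y) - a) ⬝ᵥ ν ≤ 0` almost everywhere.
-/

open Matrix MeasureTheory

/-- A unit outward normal ν to a set S at a boundary point a. -/
def IsOutwardNormal {m : ℕ} (S : Set (Fin m → ℝ)) (a ν : Fin m → ℝ) : Prop :=
  a ∈ frontier S ∧ (∑ i, ν i ^ 2 = 1) ∧ ∀ u ∈ S, (u - a) ⬝ᵥ ν ≤ 0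

section Geometry

variable {ι : Type*} [Fintype ι] {S : Set (ι → ℝ)}

theorem Convex.exists_mem_forall_dotProduct_sub_nonpos (hconv : Convex ℝ S) (hcl : IsClosed S)
    (hne : S.Nonempty) (b : ι → ℝ) : ∃ a ∈ S, ∀ u ∈ S, (u - a) ⬝ᵥ (b - a) ≤ 0 := by
  let e := EuclideanSpace.equiv ι ℝ
  have hconv' : Convex ℝ (e ⁻¹' S) := hconv.linear_preimage e.toLinearMap
  have hcomplete : IsComplete (e ⁻¹' S) := (hcl.preimage e.continuous).isComplete
  obtain ⟨a, ha, hmin⟩ := exists_norm_eq_iInf_of_complete_convex (hne.preimage e.surjective)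
    hcomplete hconv' (e.symm b)
  refine ⟨a.ofLp, ha, fun u hu => ?_⟩
  have := (norm_eq_iInf_iff_real_inner_le_zero hconv' ha).1 hmin (e.symm u) (by simpa using hu)
  simpa [EuclideanSpace.inner_eq_star_dotProduct, e] using this

theorem notMem_interior_of_forall_dotProduct_sub_nonpos {a ν : ι → ℝ} (hν : ν ≠ 0)
    (h : ∀ u ∈ S, (u - a) ⬝ᵥ ν ≤ 0) : a ∉ interior S := by
  intro ha
  have hpath : Filter.Tendsto (fun t : ℝ => a + t • ν) (nhdsWithin 0 (Set.Ioi 0)) (nhds a) := by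
    have : Continuous fun t : ℝ => a + t • ν := by fun_prop
    simpa using (this.tendsto 0).mono_left nhdsWithin_le_nhds
  obtain ⟨t, htS, ht⟩ := ((hpath.eventually (mem_interior_iff_mem_nhds.1 ha)).and
    self_mem_nhdsWithin).exists
  have hνν : 0 < ν ⬝ᵥ ν := dotProduct_self_star_pos_iff.2 hν
  have := h _ htS
  simp only [add_sub_cancel_left, smul_dotProduct, smul_eq_mul] at this
  exact (mul_pos ht hνν).not_ge this

theorem exists_pos_sum_smul_sq_eq_one {ν : ι → ℝ} (hν : ν ≠ 0) :
    ∃ c : ℝ, 0 < c ∧ ∑ i, (c • ν) i ^ 2 = 1 := by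
  have hs : 0 < ∑ i, ν i ^ 2 := by
    obtain ⟨i, hi⟩ := Function.ne_iff.1 hν
    exact Finset.sum_pos' (fun j _ => sq_nonneg _) ⟨i, Finset.mem_univ i, pow_two_pos_of_ne_zero hi⟩
  refine ⟨(√(∑ i, ν i ^ 2))⁻¹, by positivity, ?_⟩
  simp only [Pi.smul_apply, smul_eq_mul, mul_pow, ← Finset.mul_sum, inv_pow, Real.sq_sqrt hs.le]
  exact inv_mul_cancel₀ hs.ne'

end Geometry

theorem Convex.exists_isOutwardNormal_of_notMem {m : ℕ} {S : Set (Fin m → ℝ)}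
    (hconv : Convex ℝ S) (hcl : IsClosed S) (hne : S.Nonempty) {b : Fin m → ℝ} (hb : b ∉ S) :
    ∃ a ν, IsOutwardNormal S a ν ∧ 0 < (b - a) ⬝ᵥ ν := by
  obtain ⟨a, haS, hsupp⟩ := hconv.exists_mem_forall_dotProduct_sub_nonpos hcl hne b
  have hba : b - a ≠ 0 := sub_ne_zero.2 fun h => hb (h ▸ haS)
  obtain ⟨c, hc, hunit⟩ := exists_pos_sum_smul_sq_eq_one hba
  have hfrontier : a ∈ frontier S := by
    rw [frontier, hcl.closure_eq]
    exact ⟨haS, notMem_interior_of_forall_dotProduct_sub_nonpos hba hsupp⟩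
  refine ⟨a, c • (b - a), ⟨hfrontier, hunit, fun u hu => ?_⟩, ?_⟩
  · rw [dotProduct_smul, smul_eq_mul]
    exact mul_nonpos_of_nonneg_of_nonpos hc.le (hsupp u hu)
  · rw [dotProduct_smul, smul_eq_mul]
    exact mul_pos hc (dotProduct_self_star_pos_iff.2 hba)

section Integral

variable {Y n : Type*} [MeasurableSpace Y] {μ : Measure Y} [Fintype n] {k : Y → Matrix n n ℝ}

theorem integrable_mulVec_apply (hk : ∀ i j, Integrable (fun y => k y i j) μ) {u : Y → n → ℝ}
    (hu : AEStronglyMeasurable u μ) {C : ℝ} (hC : ∀ y, ‖u y‖ ≤ C) (i : n) :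
    Integrable (fun y => (k y *ᵥ u y) i) μ := by
  simp only [mulVec, dotProduct]
  refine integrable_finsetSum _ fun j _ => (hk i j).mul_bdd (c := C) ?_ (ae_of_all _ fun y => ?_)
  · exact (continuous_apply j).comp_aestronglyMeasurable hu
  · exact (norm_le_pi_norm (u y) j).trans (hC y)

theorem integrable_dotProduct {F : Y → n → ℝ} (hF : ∀ i, Integrable (fun y => F y i) μ)
    (ν : n → ℝ) : Integrable (fun y => F y ⬝ᵥ ν) μ :=
  integrable_finsetSum _ fun i _ => (hF i).mul_const _

theorem integral_dotProduct {F : Y → n → ℝ} (hF : ∀ i, Integrable (fun y => F y i) μ)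
    (ν : n → ℝ) : (fun i => ∫ y, F y i ∂μ) ⬝ᵥ ν = ∫ y, F y ⬝ᵥ ν ∂μ := by
  simp only [dotProduct]
  rw [integral_finsetSum _ fun i _ => (hF i).mul_const _]
  simp only [integral_mul_const]

variable [DecidableEq n]

theorem integral_mulVec_const (hk : ∀ i j, Integrable (fun y => k y i j) μ)
    (hk1 : ∀ i j, ∫ y, k y i j ∂μ = (1 : Matrix n n ℝ) i j) (a : n → ℝ) :
    (fun i => ∫ y, (k y *ᵥ a) i ∂μ) = a := by
  funext i
  simp only [mulVec, dotProduct]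
  rw [integral_finsetSum _ fun j _ => (hk i j).mul_const _]
  simp [integral_mul_const, hk1, one_apply]

theorem dotProduct_integral_mulVec_sub_nonpos (hk : ∀ i j, Integrable (fun y => k y i j) μ)
    (hk1 : ∀ i j, ∫ y, k y i j ∂μ = (1 : Matrix n n ℝ) i j) {u : Y → n → ℝ}
    (hu : AEStronglyMeasurable u μ) {C : ℝ} (hC : ∀ y, ‖u y‖ ≤ C) {a ν : n → ℝ}
    (hua : ∀ y, (u y - a) ⬝ᵥ ν ≤ 0) {g : Y → ℝ} (hg : ∀ y, 0 ≤ g y)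
    (hkν : ∀ᵐ y ∂μ, (k y)ᵀ *ᵥ ν = g y • ν) :
    ((fun i => ∫ y, (k y *ᵥ u y) i ∂μ) - a) ⬝ᵥ ν ≤ 0 := by
  have hku := integrable_mulVec_apply hk hu hC
  have hka := integrable_mulVec_apply hk (u := fun _ => a) aestronglyMeasurable_const
    (fun _ => le_rfl)
  have ha : a ⬝ᵥ ν = ∫ y, (k y *ᵥ a) ⬝ᵥ ν ∂μ := by
    rw [← integral_dotProduct hka, integral_mulVec_const hk hk1]
  rw [sub_dotProduct, integral_dotProduct hku, ha,
    ← integral_sub (integrable_dotProduct hku ν) (integrable_dotProduct hka ν)]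
  refine integral_nonpos_of_ae ?_
  filter_upwards [hkν] with y hy
  calc (k y *ᵥ u y) ⬝ᵥ ν - (k y *ᵥ a) ⬝ᵥ ν = (u y - a) ⬝ᵥ ((k y)ᵀ *ᵥ ν) := by
        rw [← sub_dotProduct, ← mulVec_sub, dotProduct_comm, dotProduct_mulVec, mulVec_transpose,
          dotProduct_comm]
    _ = g y * ((u y - a) ⬝ᵥ ν) := by rw [hy, dotProduct_smul, smul_eq_mul]
    _ ≤ 0 := mul_nonpos_of_nonneg_of_nonpos (hg y) (hua y)

end Integral

theorem stmt_13_general {X : Type*} {Y : Type*} [MeasurableSpace Y]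
    (m : ℕ)
    (μ : X → Measure Y) (hfin : ∀ x, IsFiniteMeasure (μ x))
    (K : X → Y → Matrix (Fin m) (Fin m) ℝ)
    (hKmeas : ∀ x i j, Measurable fun y => K x y i j)
    (hKbdd : ∀ x, ∃ C : ℝ, ∀ y i j, |K x y i j| ≤ C)
    (hnorm : ∀ x i j, ∫ y, K x y i j ∂(μ x) = (1 : Matrix (Fin m) (Fin m) ℝ) i j)
    (S : Set (Fin m → ℝ)) (hSconv : Convex ℝ S) (hScl : IsClosed S)
    (hSint : (interior S).Nonempty)
    (g : X → Y → (Fin m → ℝ) → ℝ)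
    (hgpos : ∀ x y ν, 0 ≤ g x y ν)
    (heig : ∀ x a ν, IsOutwardNormal S a ν →
      ∀ᵐ y ∂(μ x), (K x y)ᵀ.mulVec ν = g x y ν • ν) :
    ∀ u : Y → (Fin m → ℝ), Measurable u → (∃ C : ℝ, ∀ y, ‖u y‖ ≤ C) →
      (∀ y, u y ∈ S) →
      ∀ x, (fun i => ∫ y, ((K x y).mulVec (u y)) i ∂(μ x)) ∈ S := by
  intro u hu ⟨C, hC⟩ huS x
  have hK : ∀ i j, Integrable (fun y => K x y i j) (μ x) := fun i j => by
    obtain ⟨CK, hCK⟩ := hKbdd x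
    exact Integrable.of_bound (hKmeas x i j).aestronglyMeasurable CK
      (ae_of_all _ fun y => (Real.norm_eq_abs _).trans_le (hCK y i j))
  by_contra hw
  obtain ⟨a, ν, hν, hpos⟩ :=
    hSconv.exists_isOutwardNormal_of_notMem hScl (hSint.mono interior_subset) hw
  exact hpos.not_ge <| dotProduct_integral_mulVec_sub_nonpos hK (hnorm x) hu.aestronglyMeasurable
    hC (fun y => hν.2.2 _ (huS y)) (fun y => hgpos x y ν)
    (heig x a ν hν)

/-- sufficiency in Proposition 1: if the normalized matrix-valued
kernel K satisfies ᵗK(x,y)ν = g(x,y;ν)ν with g bounded and nonnegative, for every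
unit outward normal ν of the convex body 𝔖 and μ_x-a.e. y, then 𝔖 is invariant for
the transform (Tu)(x) = ∫_Y K(x,y)u(y) dμ_x(y). -/
theorem stmt_13 {X : Type*} {Y : Type*} [TopologicalSpace Y]
    [LocallyCompactSpace Y] [T2Space Y] [MeasurableSpace Y] [BorelSpace Y]
    (m : ℕ)
    (μ : X → Measure Y) (hfin : ∀ x, IsFiniteMeasure (μ x))
    (hreg : ∀ x, (μ x).Regular)
    (K : X → Y → Matrix (Fin m) (Fin m) ℝ)
    (hKmeas : ∀ x i j, Measurable fun y => K x y i j)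
    (hKbdd : ∀ x, ∃ C : ℝ, ∀ y i j, |K x y i j| ≤ C)
    (hnorm : ∀ x i j, ∫ y, K x y i j ∂(μ x) = (1 : Matrix (Fin m) (Fin m) ℝ) i j)
    (S : Set (Fin m → ℝ)) (hSconv : Convex ℝ S) (hScl : IsClosed S)
    (hSint : (interior S).Nonempty) (hSne : S ≠ Set.univ)
    (g : X → Y → (Fin m → ℝ) → ℝ)
    (hgbdd : ∃ C : ℝ, ∀ x y ν, |g x y ν| ≤ C)
    (hgpos : ∀ x y ν, 0 ≤ g x y ν)
    (heig : ∀ x a ν, IsOutwardNormal S a ν →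
      ∀ᵐ y ∂(μ x), (K x y)ᵀ.mulVec ν = g x y ν • ν) :
    ∀ u : Y → (Fin m → ℝ), Measurable u → (∃ C : ℝ, ∀ y, ‖u y‖ ≤ C) →
      (∀ y, u y ∈ S) →
      ∀ x, (fun i => ∫ y, ((K x y).mulVec (u y)) i ∂(μ x)) ∈ S :=
  stmt_13_general m μ hfin K hKmeas hKbdd hnorm S hSconv hScl hSint g hgpos heig
end

section
/- Let A be an invertible m×m real matrix and let L_1,...,L_m be scalar second-order elliptic operators with constant coefficients. If the operator 𝔄_0(D) = A·diag(L_1,...,L_m) is strongly elliptic, then the orthant {u ∈ ℝ^m : u_i ≥ α_i for all i} is invariant for the system 𝔄_0(D)u = 0 in the half-space ℝⁿ_+: every solution u ∈ C_b(cl ℝⁿ_+)^m ∩ C²(ℝⁿ_+)^m with boundary values in the orthant takes all its values in the orthant. -/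
open Matrix

/-- First-order partial derivative ∂f/∂x_j of a scalar function on ℝⁿ. -/
noncomputable def pd1 (n : ℕ) (f : (Fin n → ℝ) → ℝ) (j : Fin n)
    (x : Fin n → ℝ) : ℝ :=
  fderiv ℝ f x (Pi.single j 1)

/-- Second-order partial derivative ∂²f/∂x_j∂x_k of a scalar function on ℝⁿ. -/
noncomputable def pd2 (n : ℕ) (f : (Fin n → ℝ) → ℝ) (j k : Fin n)
    (x : Fin n → ℝ) : ℝ :=
  pd1 n (fun z => pd1 n f k z) j x

/-!
Since `A` is invertible, the system decouples into the scalar equations `L_i u_i = 0`, so it is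
enough to prove a Phragmén–Lindelöf minimum principle for one operator `L = ∑ b_jk ∂_j ∂_k` with
`b` positive semidefinite and `b_pp > 0` on the half-space `{x_p > 0}`: a supersolution `v`
(`L v ≤ 0`) that is bounded below by `-M` and nonnegative on `{x_p = 0}` is nonnegative.

For `ε, η > 0` take the barrier `P = ε x_p + η (|x'|² + K x_p (2R - x_p))`, where `x'` collects
the coordinates other than `p`, `K = tr b / b_pp` and `εR ≥ M`. Then `L P = -2η b_pp < 0`, and
`v + P ≥ 0` on the boundary of the box `0 ≤ x_p ≤ R`, `|x_q| ≤ r` once `η r² ≥ M`. At an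
interior minimum the Hessian of `v + P` would be positive semidefinite, giving `L (v + P) ≥ 0`;
hence `v + P ≥ 0` on the box. Letting `η → 0` and then `ε → 0` gives `v ≥ 0`.
-/

open Filter Topology

theorem IsLocalMin.deriv_deriv_nonneg {g : ℝ → ℝ} {t : ℝ} (hmin : IsLocalMin g t)
    (hg : ContinuousAt g t) : 0 ≤ deriv (deriv g) t := by
  by_contra! hneg
  have hmax := isLocalMax_of_deriv_deriv_neg hneg hmin.deriv_eq_zero hg
  have hconst : g =ᶠ[𝓝 t] fun _ => g t :=
    (hmin.and hmax).mono fun s hs => le_antisymm hs.2 hs.1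
  have hderiv : deriv g =ᶠ[𝓝 t] fun _ => 0 :=
    hconst.eventuallyEq_nhds.mono fun s hs => by rw [hs.deriv_eq, deriv_const]
  rw [hderiv.deriv_eq, deriv_const] at hneg
  exact hneg.false

lemma Matrix.PosSemidef.sum_mul_nonneg {ι : Type*} [Fintype ι] {b : Matrix ι ι ℝ}
    (hb : b.PosSemidef) {H : ι → ι → ℝ} (hH : ∀ e : ι → ℝ, 0 ≤ ∑ j, ∑ k, e j * e k * H j k) :
    0 ≤ ∑ j, ∑ k, b j k * H j k := by
  classical
  obtain ⟨r, v, rfl⟩ := Matrix.posSemidef_iff_eq_sum_vecMulVec.mp hb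
  simp only [Matrix.sum_apply, vecMulVec_apply, star_trivial, Finset.sum_mul]
  have hcomm : ∀ j, ∑ k, ∑ l, v l j * v l k * H j k = ∑ l, ∑ k, v l j * v l k * H j k :=
    fun j => Finset.sum_comm
  simp_rw [hcomm]
  rw [Finset.sum_comm]
  exact Finset.sum_nonneg fun l _ => hH (v l)

lemma nonneg_of_forall_pos_nonneg_add_mul {c B : ℝ} (h : ∀ η > 0, 0 ≤ c + η * B) : 0 ≤ c := by
  have hlim : Tendsto (fun η => c + η * B) (𝓝[>] 0) (𝓝 c) := by
    have : Continuous fun η => c + η * B := by fun_prop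
    simpa using (this.tendsto 0).mono_left nhdsWithin_le_nhds
  exact ge_of_tendsto hlim (eventually_nhdsWithin_of_forall h)

lemma IsCompact.nonneg_of_not_isLocalMin {E : Type*} [TopologicalSpace E] {K S : Set E}
    {w : E → ℝ} (hK : IsCompact K) (hS : IsOpen S) (hSK : S ⊆ K) (hw : ContinuousOn w K)
    (hfront : ∀ x ∈ K \ S, 0 ≤ w x) (hmin : ∀ x ∈ S, ¬IsLocalMin w x) {x : E} (hx : x ∈ K) :
    0 ≤ w x := by
  obtain ⟨y, hyK, hy⟩ := hK.exists_isMinOn ⟨x, hx⟩ hw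
  by_cases hyS : y ∈ S
  · exact absurd ((hy.on_subset hSK).isLocalMin (hS.mem_nhds hyS)) (hmin y hyS)
  · exact (hfront y ⟨hyK, hyS⟩).trans (hy hx)

section PartialDerivatives

variable {N : ℕ} {f g : (Fin N → ℝ) → ℝ} {x : Fin N → ℝ}

lemma fderiv_apply_eq_sum_pd1 (f : (Fin N → ℝ) → ℝ) (x e : Fin N → ℝ) :
    fderiv ℝ f x e = ∑ k, e k * pd1 N f k x := by
  conv_lhs => rw [← Finset.univ_sum_single e]
  refine (map_sum _ _ _).trans (Finset.sum_congr rfl fun k _ => ?_)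
  rw [pd1, ← smul_eq_mul, ← map_smul, ← Pi.single_smul', smul_eq_mul, mul_one]

lemma ContDiffAt.differentiableAt_fderiv_apply (hf : ContDiffAt ℝ 2 f x) (e : Fin N → ℝ) :
    DifferentiableAt ℝ (fun z => fderiv ℝ f z e) x :=
  ((hf.fderiv_right (m := 1) (by norm_num)).differentiableAt (by norm_num)).clm_apply
    (differentiableAt_const e)

lemma ContDiffAt.differentiableAt_pd1 (hf : ContDiffAt ℝ 2 f x) (k : Fin N) :
    DifferentiableAt ℝ (fun z => pd1 N f k z) x :=
  hf.differentiableAt_fderiv_apply _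

lemma ContDiffAt.fderiv_fderiv_apply (hf : ContDiffAt ℝ 2 f x) (e : Fin N → ℝ) :
    fderiv ℝ (fun z => fderiv ℝ f z e) x e = ∑ j, ∑ k, e j * e k * pd2 N f j k x := by
  simp_rw [fderiv_apply_eq_sum_pd1 f _ e]
  rw [fderiv_fun_sum fun k _ => (hf.differentiableAt_pd1 k).const_mul (e k)]
  simp_rw [_root_.sum_apply, fderiv_const_mul (hf.differentiableAt_pd1 _),
    _root_.smul_apply, fderiv_apply_eq_sum_pd1 (fun z => pd1 N f _ z), smul_eq_mul,
    Finset.mul_sum]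
  rw [Finset.sum_comm]
  simp only [pd2]
  congr! 2 with j _ k _
  ring

lemma IsLocalMin.sum_mul_pd2_nonneg (hmin : IsLocalMin f x) (hf : ContDiffAt ℝ 2 f x)
    (e : Fin N → ℝ) : 0 ≤ ∑ j, ∑ k, e j * e k * pd2 N f j k x := by
  set γ : ℝ → Fin N → ℝ := fun t => x + t • e
  have hγ : ∀ t, HasDerivAt γ e t := fun t => by
    simpa [γ] using ((hasDerivAt_id t).smul_const e).const_add x
  have hγ0 : γ 0 = x := by simp [γ]
  have hγc : Continuous γ := by fun_prop
  have hdiff : ∀ᶠ t in 𝓝 (0 : ℝ), DifferentiableAt ℝ f (γ t) := by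
    refine hγc.continuousAt.eventually (p := fun z => DifferentiableAt ℝ f z) ?_
    rw [hγ0]
    exact (hf.eventually (by simp)).mono fun z hz => hz.differentiableAt (by simp)
  have hderiv : deriv (f ∘ γ) =ᶠ[𝓝 0] fun t => fderiv ℝ f (γ t) e :=
    hdiff.mono fun t ht => (ht.hasFDerivAt.comp_hasDerivAt t (hγ t)).deriv
  have hderiv2 : HasDerivAt (fun t => fderiv ℝ f (γ t) e)
      (fderiv ℝ (fun z => fderiv ℝ f z e) x e) 0 :=
    (hf.differentiableAt_fderiv_apply e).hasFDerivAt.comp_hasDerivAt_of_eq 0 (hγ 0) hγ0.symm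
  have hline : IsLocalMin (f ∘ γ) 0 := by
    apply IsLocalMin.comp_continuous _ hγc.continuousAt
    rwa [hγ0]
  have h := hline.deriv_deriv_nonneg (hf.continuousAt.comp_of_eq hγc.continuousAt hγ0)
  rwa [hderiv.deriv_eq, hderiv2.deriv, hf.fderiv_fderiv_apply] at h

lemma pd2_add (hf : ContDiffAt ℝ 2 f x) (hg : ContDiffAt ℝ 2 g x) (j k : Fin N) :
    pd2 N (fun z => f z + g z) j k x = pd2 N f j k x + pd2 N g j k x := by
  have hpd1 : (fun z => pd1 N (fun z => f z + g z) k z) =ᶠ[𝓝 x]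
      fun z => pd1 N f k z + pd1 N g k z := by
    filter_upwards [hf.eventually (by simp), hg.eventually (by simp)] with z hfz hgz
    simp only [pd1, fderiv_fun_add (hfz.differentiableAt (by simp))
      (hgz.differentiableAt (by simp)), _root_.add_apply]
  show fderiv ℝ (fun z => pd1 N (fun z => f z + g z) k z) x (Pi.single j 1) =
    fderiv ℝ (fun z => pd1 N f k z) x (Pi.single j 1) +
      fderiv ℝ (fun z => pd1 N g k z) x (Pi.single j 1)
  rw [hpd1.fderiv_eq, fderiv_fun_add (hf.differentiableAt_pd1 k) (hg.differentiableAt_pd1 k)]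
  rfl

lemma pd2_sub_const (f : (Fin N → ℝ) → ℝ) (c : ℝ) (j k : Fin N) (x : Fin N → ℝ) :
    pd2 N (fun z => f z - c) j k x = pd2 N f j k x := by
  simp only [pd2, pd1, fderiv_sub_const]

lemma pd1_quadratic (η γ c : ℝ) (p k : Fin N) (x : Fin N → ℝ) :
    pd1 N (fun z => η * ∑ l, z l ^ 2 + γ * z p ^ 2 + c * z p) k x =
      2 * η * x k + if k = p then 2 * γ * x p + c else 0 := by
  have hl (l : Fin N) := hasFDerivAt_apply (𝕜 := ℝ) l x
  have h := (((HasFDerivAt.fun_sum (u := Finset.univ) fun l _ => (hl l).pow 2).const_mul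
    η).fun_add (((hl p).pow 2).const_mul γ)).fun_add ((hl p).const_mul c)
  rw [pd1, h.fderiv]
  simp only [Nat.add_one_sub_one, pow_one, nsmul_eq_mul, Nat.cast_ofNat, _root_.add_apply,
    _root_.smul_apply, _root_.sum_apply, ContinuousLinearMap.proj_apply, Pi.single_apply,
    smul_eq_mul, mul_ite, mul_one, mul_zero, Finset.sum_ite_eq', Finset.mem_univ, ↓reduceIte,
    eq_comm (a := p)]
  split_ifs <;> ring

lemma pd1_affine (a c d : ℝ) (k p j : Fin N) (x : Fin N → ℝ) :
    pd1 N (fun z => a * z k + c * z p + d) j x =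
      (if j = k then a else 0) + if j = p then c else 0 := by
  have hl (l : Fin N) := hasFDerivAt_apply (𝕜 := ℝ) l x
  have h := (((hl k).const_mul a).fun_add ((hl p).const_mul c)).add_const d
  rw [pd1, h.fderiv]
  simp [Pi.single_apply, eq_comm]

lemma pd2_quadratic (η γ c : ℝ) (p j k : Fin N) (x : Fin N → ℝ) :
    pd2 N (fun z => η * ∑ l, z l ^ 2 + γ * z p ^ 2 + c * z p) j k x =
      (if j = k then 2 * η else 0) + if j = p ∧ k = p then 2 * γ else 0 := by
  have hpd1 : (fun z => pd1 N (fun z => η * ∑ l, z l ^ 2 + γ * z p ^ 2 + c * z p) k z) =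
      fun z => 2 * η * z k + (if k = p then 2 * γ else 0) * z p + if k = p then c else 0 := by
    ext z
    rw [pd1_quadratic]
    split_ifs <;> ring
  rw [pd2, hpd1, pd1_affine]
  split_ifs <;> simp_all

lemma sum_mul_pd2_quadratic {b : Matrix (Fin N) (Fin N) ℝ} (η γ c : ℝ) (p : Fin N)
    (x : Fin N → ℝ) :
    ∑ j, ∑ k, b j k * pd2 N (fun z => η * ∑ l, z l ^ 2 + γ * z p ^ 2 + c * z p) j k x =
      2 * η * b.trace + 2 * γ * b p p := by
  simp only [pd2_quadratic, ite_and, mul_add, mul_ite, mul_zero, Finset.sum_add_distrib,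
    Finset.sum_ite_eq, Finset.mem_univ, ↓reduceIte, Finset.sum_ite_irrel, Finset.sum_ite_eq',
    Finset.sum_const_zero, ← Finset.sum_mul, trace, diag_apply]
  ring

lemma not_isLocalMin_of_sum_mul_pd2_neg {b : Matrix (Fin N) (Fin N) ℝ} (hb : b.PosSemidef)
    (hf : ContDiffAt ℝ 2 f x) (hneg : ∑ j, ∑ k, b j k * pd2 N f j k x < 0) : ¬IsLocalMin f x :=
  fun hmin => hneg.not_ge (hb.sum_mul_nonneg (hmin.sum_mul_pd2_nonneg hf))

end PartialDerivatives

section HalfSpace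

variable {N : ℕ} {p : Fin N} {b : Matrix (Fin N) (Fin N) ℝ} {v : (Fin N → ℝ) → ℝ}

def halfSpaceBarrier (p : Fin N) (K ε η R : ℝ) (z : Fin N → ℝ) : ℝ :=
  ε * z p + η * (∑ l ∈ Finset.univ.erase p, z l ^ 2 + K * z p * (2 * R - z p))

lemma halfSpaceBarrier_eq (p : Fin N) (K ε η R : ℝ) :
    halfSpaceBarrier p K ε η R =
      fun z => η * ∑ l, z l ^ 2 + -(η * (1 + K)) * z p ^ 2 + (ε + 2 * η * K * R) * z p := by
  ext z
  rw [halfSpaceBarrier, Finset.sum_erase_eq_sub (Finset.mem_univ p)]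
  ring

lemma contDiff_halfSpaceBarrier (p : Fin N) (K ε η R : ℝ) :
    ContDiff ℝ 2 (halfSpaceBarrier p K ε η R) := by
  rw [halfSpaceBarrier_eq]
  fun_prop

lemma sum_mul_pd2_halfSpaceBarrier {K : ℝ}
    (hK : K * b p p = b.trace) (ε η R : ℝ) (x : Fin N → ℝ) :
    ∑ j, ∑ k, b j k * pd2 N (halfSpaceBarrier p K ε η R) j k x = -(2 * η * b p p) := by
  rw [halfSpaceBarrier_eq, sum_mul_pd2_quadratic]
  linear_combination (-2 * η) * hK

lemma le_halfSpaceBarrier {K ε η R : ℝ} (hη : 0 ≤ η) (hK : 0 ≤ K) {z : Fin N → ℝ}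
    (hz : 0 ≤ z p) (hzR : z p ≤ R) :
    ε * z p + η * ∑ l ∈ Finset.univ.erase p, z l ^ 2 ≤ halfSpaceBarrier p K ε η R z := by
  have : 0 ≤ η * (K * z p * (2 * R - z p)) :=
    mul_nonneg hη (mul_nonneg (mul_nonneg hK hz) (by linarith))
  rw [halfSpaceBarrier, mul_add]
  linarith

lemma nonneg_add_halfSpaceBarrier_of_face (hbdry : ∀ x, x p = 0 → 0 ≤ v x) {M : ℝ}
    (hM : ∀ x, 0 ≤ x p → -M ≤ v x) {K ε η R r : ℝ} (hK : 0 ≤ K) (hε : 0 ≤ ε) (hη : 0 ≤ η)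
    (hR : M ≤ ε * R) (hr : M ≤ η * r ^ 2) {z : Fin N → ℝ} (hz : 0 ≤ z p) (hzR : z p ≤ R)
    (hface : z p = 0 ∨ z p = R ∨ ∃ q ≠ p, r ^ 2 ≤ z q ^ 2) :
    0 ≤ v z + halfSpaceBarrier p K ε η R z := by
  have hP := le_halfSpaceBarrier (ε := ε) hη hK hz hzR
  have hsum : 0 ≤ ∑ l ∈ Finset.univ.erase p, z l ^ 2 := by positivity
  rcases hface with hz0 | hzR' | ⟨q, hqp, hq⟩
  · have := hbdry z hz0
    rw [hz0] at hP
    nlinarith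
  · have := hM z hz
    rw [hzR'] at hP
    nlinarith
  · have hzq : z q ^ 2 ≤ ∑ l ∈ Finset.univ.erase p, z l ^ 2 :=
      Finset.single_le_sum (fun l _ => sq_nonneg (z l))
        (Finset.mem_erase.2 ⟨hqp, Finset.mem_univ q⟩)
    have := hM z hz
    nlinarith [mul_le_mul_of_nonneg_left (hq.trans hzq) hη, mul_nonneg hε hz]

lemma exists_le_mul_sq_and_abs_le (M : ℝ) {η : ℝ} (hη : 0 < η) (x : Fin N → ℝ) :
    ∃ r, M ≤ η * r ^ 2 ∧ ∀ l, |x l| ≤ r := by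
  set r := max 1 (max (M / η) ‖x‖)
  refine ⟨r, ?_, fun l => (norm_le_pi_norm x l).trans ((le_max_right _ _).trans (le_max_right _ _))⟩
  have h1 : 1 ≤ r := le_max_left _ _
  have h2 : M ≤ η * r := (div_le_iff₀' hη).1 ((le_max_left _ _).trans (le_max_right _ _))
  nlinarith [mul_le_mul_of_nonneg_left (show r ≤ r ^ 2 by nlinarith) hη.le]

lemma mem_face_of_mem_Icc_diff {R r : ℝ} {z : Fin N → ℝ}
    (hz : z ∈ Set.Icc (fun l => if l = p then 0 else -r) (fun l => if l = p then R else r) \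
      Set.univ.pi fun l => Set.Ioo (if l = p then 0 else -r) (if l = p then R else r)) :
    z p = 0 ∨ z p = R ∨ ∃ q ≠ p, r ^ 2 ≤ z q ^ 2 := by
  obtain ⟨⟨hlo, hhi⟩, hS⟩ := hz
  simp only [Set.mem_univ_pi, Set.mem_Ioo, not_forall, not_and, not_lt] at hS
  obtain ⟨q, hq⟩ := hS
  have hloq := hlo q
  have hhiq := hhi q
  by_cases hqp : q = p
  · subst hqp
    simp only [if_true] at hq hloq hhiq
    by_cases h0 : z q = 0
    · exact Or.inl h0
    · exact Or.inr (Or.inl (le_antisymm hhiq (hq (lt_of_le_of_ne hloq (Ne.symm h0)))))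
  · simp only [hqp, if_false] at hq hloq hhiq
    refine Or.inr (Or.inr ⟨q, hqp, ?_⟩)
    rcases hloq.lt_or_eq with h | h
    · rw [le_antisymm hhiq (hq h)]
    · rw [← h, neg_sq]

lemma nonneg_add_halfSpaceBarrier (hb : b.PosSemidef) (hbp : 0 < b p p)
    (hv_cont : ContinuousOn v {x | 0 ≤ x p}) (hv_diff : ContDiffOn ℝ 2 v {x | 0 < x p})
    (hsuper : ∀ x, 0 < x p → ∑ j, ∑ k, b j k * pd2 N v j k x ≤ 0)
    (hbdry : ∀ x, x p = 0 → 0 ≤ v x) {M : ℝ} (hM : ∀ x, 0 ≤ x p → -M ≤ v x)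
    {ε η R : ℝ} (hε : 0 < ε) (hη : 0 < η) (hR : M ≤ ε * R) {x : Fin N → ℝ} (hx : 0 ≤ x p)
    (hxR : x p ≤ R) :
    0 ≤ v x + halfSpaceBarrier p (b.trace / b p p) ε η R x := by
  set K := b.trace / b p p
  have hK : 0 ≤ K := div_nonneg hb.trace_nonneg hbp.le
  have hKb : K * b p p = b.trace := div_mul_cancel₀ _ hbp.ne'
  obtain ⟨r, hr, hxr⟩ := exists_le_mul_sq_and_abs_le M hη x
  set lo : Fin N → ℝ := fun l => if l = p then 0 else -r
  set hi : Fin N → ℝ := fun l => if l = p then R else r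
  have hhalf : IsOpen {z : Fin N → ℝ | 0 < z p} := isOpen_lt continuous_const (continuous_apply p)
  refine (isCompact_Icc (a := lo) (b := hi)).nonneg_of_not_isLocalMin
    (w := fun z => v z + halfSpaceBarrier p K ε η R z)
    (isOpen_set_pi Set.finite_univ fun _ _ => isOpen_Ioo)
    (fun z hz => ⟨fun l => (hz l trivial).1.le, fun l => (hz l trivial).2.le⟩) ?_ ?_ ?_ ?_
  · refine (hv_cont.mono fun z hz => ?_).add
      (contDiff_halfSpaceBarrier p K ε η R).continuous.continuousOn
    simpa [lo] using hz.1 p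
  · intro z hz
    have hzp : 0 ≤ z p := by simpa [lo] using hz.1.1 p
    have hzR : z p ≤ R := by simpa [hi] using hz.1.2 p
    exact nonneg_add_halfSpaceBarrier_of_face hbdry hM hK hε.le hη.le hR hr hzp hzR
      (mem_face_of_mem_Icc_diff hz)
  · intro z hz
    have hzp : 0 < z p := by simpa [lo] using (hz p trivial).1
    have hvz : ContDiffAt ℝ 2 v z := hv_diff.contDiffAt (hhalf.mem_nhds hzp)
    have hPz := (contDiff_halfSpaceBarrier p K ε η R).contDiffAt (x := z)
    refine not_isLocalMin_of_sum_mul_pd2_neg hb (hvz.add hPz) ?_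
    simp_rw [pd2_add hvz hPz, mul_add, Finset.sum_add_distrib, sum_mul_pd2_halfSpaceBarrier hKb]
    linarith [hsuper z hzp, mul_pos hη hbp]
  · refine ⟨fun l => ?_, fun l => ?_⟩ <;> by_cases hl : l = p
    · simpa [lo, hl] using hx
    · simpa [lo, hl] using neg_le_of_abs_le (hxr l)
    · simpa [hi, hl] using hxR
    · simpa [hi, hl] using le_of_abs_le (hxr l)

theorem halfSpace_nonneg_of_supersolution (hb : b.PosSemidef) (hbp : 0 < b p p)
    (hv_cont : ContinuousOn v {x | 0 ≤ x p}) (hv_diff : ContDiffOn ℝ 2 v {x | 0 < x p})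
    (hv_bdd : BddBelow (v '' {x | 0 ≤ x p}))
    (hsuper : ∀ x, 0 < x p → ∑ j, ∑ k, b j k * pd2 N v j k x ≤ 0)
    (hbdry : ∀ x, x p = 0 → 0 ≤ v x) {x : Fin N → ℝ} (hx : 0 ≤ x p) : 0 ≤ v x := by
  obtain ⟨m, hm⟩ := hv_bdd
  have hM : ∀ z, 0 ≤ z p → -|m| ≤ v z := fun z hz =>
    (neg_abs_le m).trans (hm ⟨z, hz, rfl⟩)
  refine nonneg_of_forall_pos_nonneg_add_mul (B := x p) fun ε hε => ?_
  set R := max (|m| / ε) (x p)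
  have hR : |m| ≤ ε * R := by
    rw [← div_le_iff₀' hε]
    exact le_max_left _ _
  refine nonneg_of_forall_pos_nonneg_add_mul
    (B := ∑ l ∈ Finset.univ.erase p, x l ^ 2 + b.trace / b p p * x p * (2 * R - x p))
    fun η hη => ?_
  have := nonneg_add_halfSpaceBarrier hb hbp hv_cont hv_diff hsuper hbdry hM hε hη hR hx
    (le_max_right _ _)
  rw [halfSpaceBarrier] at this
  linarith

end HalfSpace

lemma Matrix.posSemidef_of_forall_sum_mul_nonneg {N : ℕ} {b : Fin N → Fin N → ℝ}
    (hsym : ∀ j k, b j k = b k j) (hnonneg : ∀ σ : Fin N → ℝ, 0 ≤ ∑ j, ∑ k, b j k * (σ j * σ k)) :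
    (Matrix.of b).PosSemidef := by
  refine Matrix.posSemidef_iff_dotProduct_mulVec.2 ⟨?_, fun σ => ?_⟩
  · ext j k
    simp [hsym j k]
  · have hσ : star σ ⬝ᵥ Matrix.of b *ᵥ σ = ∑ j, ∑ k, b j k * (σ j * σ k) := by
      simp only [dotProduct, mulVec, Matrix.of_apply, star_trivial, Finset.mul_sum]
      exact Finset.sum_congr rfl fun j _ => Finset.sum_congr rfl fun k _ => by ring
    exact hσ ▸ hnonneg σ

lemma le_diag_of_forall_le_sum_mul {N : ℕ} {b : Fin N → Fin N → ℝ} {δ : ℝ}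
    (hell : ∀ σ : Fin N → ℝ, δ * ∑ j, σ j ^ 2 ≤ ∑ j, ∑ k, b j k * (σ j * σ k)) (p : Fin N) :
    δ ≤ b p p := by
  simpa [Pi.single_apply, mul_ite, ite_mul] using hell (Pi.single p 1)

theorem stmt_17_general (n m : ℕ)
    (A : Matrix (Fin m) (Fin m) ℝ) (hA : IsUnit A)
    (a : Fin m → Fin (n + 1) → Fin (n + 1) → ℝ)
    (hsym : ∀ i j k, a i j k = a i k j)
    (δ : ℝ) (hδ : 0 < δ)
    (hellL : ∀ i, ∀ σ : Fin (n + 1) → ℝ,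
      δ * ∑ j, σ j ^ 2 ≤ ∑ j, ∑ k, a i j k * (σ j * σ k))
    (α : Fin m → ℝ)
    (u : (Fin (n + 1) → ℝ) → (Fin m → ℝ))
    (hu1 : ContinuousOn u {x | 0 ≤ x (Fin.last n)})
    (hu2 : ContDiffOn ℝ 2 u {x | 0 < x (Fin.last n)})
    (hub : ∃ C : ℝ, ∀ x, 0 ≤ x (Fin.last n) → ‖u x‖ ≤ C)
    (hsol : ∀ x, 0 < x (Fin.last n) →
      A.mulVec (fun i => ∑ j, ∑ k, a i j k * pd2 (n + 1) (fun z => u z i) j k x)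
        = 0)
    (hbc : ∀ x, x (Fin.last n) = 0 → ∀ i, α i ≤ u x i) :
    ∀ x, 0 ≤ x (Fin.last n) → ∀ i, α i ≤ u x i := by
  intro x hx i
  obtain ⟨C, hC⟩ := hub
  have hdecouple : ∀ z, 0 < z (Fin.last n) →
      ∑ j, ∑ k, a i j k * pd2 (n + 1) (fun y => u y i) j k z = 0 := fun z hz =>
    congrFun (eq_zero_of_mulVec_eq_zero ((A.isUnit_iff_isUnit_det.1 hA).ne_zero) (hsol z hz)) i
  have hbdd : BddBelow ((fun z => u z i - α i) '' {z | 0 ≤ z (Fin.last n)}) := by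
    refine ⟨-C - α i, ?_⟩
    rintro _ ⟨z, hz, rfl⟩
    have := (norm_le_pi_norm (u z) i).trans (hC z hz)
    linarith [neg_abs_le (u z i), Real.norm_eq_abs (u z i)]
  have := halfSpace_nonneg_of_supersolution (b := Matrix.of (a i)) (v := fun z => u z i - α i)
    (Matrix.posSemidef_of_forall_sum_mul_nonneg (hsym i) fun σ =>
      (by positivity : 0 ≤ δ * ∑ j, σ j ^ 2).trans (hellL i σ))
    (hδ.trans_le (le_diag_of_forall_le_sum_mul (hellL i) _))
    ((continuousOn_pi.1 hu1 i).sub continuousOn_const)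
    ((contDiffOn_pi.1 hu2 i).sub contDiffOn_const)
    hbdd (fun z hz => by simp [pd2_sub_const, hdecouple z hz])
    (fun z hz => sub_nonneg.2 (hbc z hz i)) hx
  linarith

/-- sufficiency in Theorem 3: if A is an invertible m×m matrix,
L_1,...,L_m are scalar constant-coefficient elliptic operators, and the operator
𝔄₀(D) = A·diag(L_1,...,L_m) (with matrix coefficients 𝔄_{jk} = A·diag(a⁽ⁱ⁾_{jk}))
is strongly elliptic, then the orthant {u : u_i ≥ α_i ∀i} is invariant for the
system 𝔄₀(D)u = 0 in the half-space ℝⁿ₊ = {x : x_n > 0}: every bounded solution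
u ∈ C_b(cl ℝⁿ₊)ᵐ ∩ C²(ℝⁿ₊)ᵐ with boundary values in the orthant takes all its
values in the orthant. (Dimension is n+1, with last coordinate normal to the
boundary.) -/
theorem stmt_17 (n m : ℕ)
    (A : Matrix (Fin m) (Fin m) ℝ) (hA : IsUnit A)
    (a : Fin m → Fin (n + 1) → Fin (n + 1) → ℝ)
    (hsym : ∀ i j k, a i j k = a i k j)
    (δ : ℝ) (hδ : 0 < δ)
    (hellL : ∀ i, ∀ σ : Fin (n + 1) → ℝ,
      δ * ∑ j, σ j ^ 2 ≤ ∑ j, ∑ k, a i j k * (σ j * σ k))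
    (δ' : ℝ) (hδ' : 0 < δ')
    (hSE : ∀ (σ : Fin (n + 1) → ℝ) (ζ : Fin m → ℝ),
      δ' * ((∑ j, σ j ^ 2) * (∑ i, ζ i ^ 2)) ≤
        ∑ j, ∑ k, σ j * σ k *
          ((A * Matrix.diagonal fun i => a i j k).mulVec ζ ⬝ᵥ ζ))
    (α : Fin m → ℝ)
    (u : (Fin (n + 1) → ℝ) → (Fin m → ℝ))
    (hu1 : ContinuousOn u {x | 0 ≤ x (Fin.last n)})
    (hu2 : ContDiffOn ℝ 2 u {x | 0 < x (Fin.last n)})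
    (hub : ∃ C : ℝ, ∀ x, 0 ≤ x (Fin.last n) → ‖u x‖ ≤ C)
    (hsol : ∀ x, 0 < x (Fin.last n) →
      A.mulVec (fun i => ∑ j, ∑ k, a i j k * pd2 (n + 1) (fun z => u z i) j k x)
        = 0)
    (hbc : ∀ x, x (Fin.last n) = 0 → ∀ i, α i ≤ u x i) :
    ∀ x, 0 ≤ x (Fin.last n) → ∀ i, α i ≤ u x i :=
  stmt_17_general n m A hA a hsym δ hδ hellL α u hu1 hu2 hub hsol hbc
end
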